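/- arXiv:2011.02618 — 4 statements merged into one kernel-verified Lean document; each statement's English description precedes it below -/
import Mathlib

section
/- Let $E$ be a convex subset of a normed vector space $\mathcal{X}$, $\bar{e} \in E$, and $y \in T_E^\flat(\bar{e})$. Then $T_E^{\flat(2)}(\bar{e}, y) + T_E^\flat(\bar{e}) = T_E^{\flat(2)}(\bar{e}, y)$, i.e. the second-order adjacent subset is stable under addition of elements of the adjacent cone. -/
open Filter Metric Set MeasureTheory Pointwise

/-- Kuratowski lower limit of a family of sets `K h` as `h → 0⁺`:
points whose distance to `K h` tends to `0`. -/
noncomputable def liminfSets {X : Type*} [PseudoMetricSpace X] (K : ℝ → Set X) : Set X :=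
  {v | Filter.Tendsto (fun h => Metric.infDist v (K h)) (nhdsWithin 0 (Set.Ioi 0)) (nhds 0)}

/-- The adjacent cone `T_K^♭(x) = Liminf_{h→0⁺} (K - x)/h`. -/
noncomputable def adjCone {X : Type*} [NormedAddCommGroup X] [NormedSpace ℝ X]
    (K : Set X) (x : X) : Set X :=
  liminfSets (fun h => (fun k => h⁻¹ • (k - x)) '' K)

/-- The second-order adjacent subset `T_K^{♭(2)}(x,v) = Liminf_{h→0⁺} (K - x - hv)/h²`. -/
noncomputable def adjCone2 {X : Type*} [NormedAddCommGroup X] [NormedSpace ℝ X]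
    (K : Set X) (x v : X) : Set X :=
  liminfSets (fun h => (fun k => (h ^ 2)⁻¹ • (k - x - h • v)) '' K)

/-!
Let `w ∈ T_E^{♭(2)}(ē, y)` and `u ∈ T_E^♭(ē)`. Given `h`, put `s = h / (1 - h)` and pick
`a ∈ E` with `(a - ē - s y) / s² ≈ w` and `b ∈ E` with `(b - ē) / h ≈ u`. The convex combination
`(1 - h) a + h b ∈ E` then satisfies
`((1 - h) a + h b - ē - h y) / h² = (1 + s) (a - ē - s y) / s² + (b - ē) / h ≈ (1 + s) w + u`,
and `(1 + s) w → w` as `h → 0⁺`. The reverse inclusion holds because `0 ∈ T_E^♭(ē)`.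
-/

open Topology

section liminfSets

variable {X : Type*} [PseudoMetricSpace X] {K : ℝ → Set X} {v : X}

lemma mem_liminfSets_iff (hK : ∀ t, (K t).Nonempty) :
    v ∈ liminfSets K ↔ ∀ ε > 0, ∀ᶠ t in 𝓝[>] (0 : ℝ), ∃ k ∈ K t, dist v k < ε := by
  simp only [liminfSets, mem_ofPred_eq, Metric.tendsto_nhds, Real.dist_0_eq_abs,
    abs_of_nonneg infDist_nonneg, infDist_lt_iff (hK _)]

end liminfSets

lemma tendsto_div_one_sub_nhdsGT_zero :
    Tendsto (fun h : ℝ => h / (1 - h)) (𝓝[>] 0) (𝓝[>] 0) := by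
  refine tendsto_nhdsWithin_of_tendsto_nhds_of_eventually_within _ ?_ ?_
  · have : ContinuousAt (fun h : ℝ => h / (1 - h)) 0 := by fun_prop (disch := norm_num)
    simpa using this.tendsto.mono_left nhdsWithin_le_nhds
  · filter_upwards [Ioo_mem_nhdsGT one_pos] with h hh
    exact div_pos hh.1 (sub_pos.2 hh.2)

section NormedSpace

variable {X : Type*} [NormedAddCommGroup X] [NormedSpace ℝ X]

lemma dist_add_one_add_smul_add_le {s : ℝ} (hs : 0 ≤ s) (w u A B : X) :
    dist (w + u) ((1 + s) • A + B) ≤ s * ‖w‖ + (1 + s) * dist w A + dist u B := by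
  have hsplit : w + u - ((1 + s) • A + B) = (1 + s) • (w - A) - s • w + (u - B) := by
    module
  calc dist (w + u) ((1 + s) • A + B)
      ≤ ‖(1 + s) • (w - A)‖ + ‖s • w‖ + ‖u - B‖ := by
        rw [dist_eq_norm, hsplit]
        exact (norm_add_le _ _).trans (add_le_add_left (norm_sub_le _ _) _)
    _ = s * ‖w‖ + (1 + s) * dist w A + dist u B := by
        rw [norm_smul, norm_smul, Real.norm_of_nonneg hs, Real.norm_of_nonneg (by linarith),
          dist_eq_norm, dist_eq_norm]
        ring

lemma inv_sq_smul_convexCombination_sub {h : ℝ} (h0 : h ≠ 0) (h1 : h ≠ 1) (a b e y : X) :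
    (h ^ 2)⁻¹ • ((1 - h) • a + h • b - e - h • y) =
      (1 + h / (1 - h)) • (((h / (1 - h)) ^ 2)⁻¹ • (a - e - (h / (1 - h)) • y)) +
        h⁻¹ • (b - e) := by
  have : 1 - h ≠ 0 := sub_ne_zero.2 (Ne.symm h1)
  match_scalars <;> field_simp <;> ring

lemma zero_mem_adjCone {E : Set X} {e : X} (he : e ∈ E) : (0 : X) ∈ adjCone E e := by
  refine tendsto_const_nhds.congr fun _ => (infDist_zero_of_mem ?_).symm
  exact ⟨e, he, by simp⟩

lemma add_mem_adjCone2 {E : Set X} (hE : Convex ℝ E) {e y w u : X} (he : e ∈ E)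
    (hw : w ∈ adjCone2 E e y) (hu : u ∈ adjCone E e) : w + u ∈ adjCone2 E e y := by
  have hne (f : X → X) : (f '' E).Nonempty := ⟨f e, mem_image_of_mem f he⟩
  rw [adjCone2, mem_liminfSets_iff fun _ => hne _] at hw ⊢
  rw [adjCone, mem_liminfSets_iff fun _ => hne _] at hu
  intro ε hε
  have hε4 : 0 < ε / 4 := by positivity
  have hsmall : ∀ᶠ s in 𝓝[>] (0 : ℝ), s < 1 ∧ s * ‖w‖ < ε / 4 := by
    have hlim : Tendsto (fun s : ℝ => s * ‖w‖) (𝓝[>] 0) (𝓝 0) := by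
      simpa using ((tendsto_id (x := 𝓝 (0 : ℝ))).mul_const ‖w‖).mono_left nhdsWithin_le_nhds
    filter_upwards [Ioo_mem_nhdsGT one_pos, hlim.eventually (eventually_lt_nhds hε4)]
      with s hs hsw using ⟨hs.2, hsw⟩
  filter_upwards [tendsto_div_one_sub_nhdsGT_zero.eventually ((hw _ hε4).and hsmall),
    hu _ hε4, Ioo_mem_nhdsGT one_pos]
    with h ⟨⟨_, ⟨a, ha, rfl⟩, hwa⟩, hs1, hsw⟩ ⟨_, ⟨b, hb, rfl⟩, hub⟩ ⟨h0, h1⟩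
  refine ⟨_, mem_image_of_mem _ (hE ha hb (sub_nonneg.2 h1.le) h0.le (sub_add_cancel 1 h)), ?_⟩
  beta_reduce at hwa hub ⊢
  rw [inv_sq_smul_convexCombination_sub h0.ne' h1.ne]
  refine (dist_add_one_add_smul_add_le (div_nonneg h0.le (sub_nonneg.2 h1.le)) _ _ _ _).trans_lt ?_
  nlinarith [dist_nonneg (x := w) (y := ((h / (1 - h)) ^ 2)⁻¹ • (a - e - (h / (1 - h)) • y))]

end NormedSpace

theorem stmt_3_general {X : Type*} [NormedAddCommGroup X] [NormedSpace ℝ X]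
    (E : Set X) (hE : Convex ℝ E) (e : X) (he : e ∈ E) (y : X) :
    adjCone2 E e y + adjCone E e = adjCone2 E e y :=
  (add_subset_iff.2 fun _ hw _ hu => add_mem_adjCone2 hE he hw hu).antisymm
    (subset_add_left _ (zero_mem_adjCone he))

theorem stmt_3 {X : Type*} [NormedAddCommGroup X] [NormedSpace ℝ X]
    (E : Set X) (hE : Convex ℝ E) (e : X) (he : e ∈ E) (y : X) (hy : y ∈ adjCone E e)
    (hne : (adjCone2 E e y).Nonempty) :
    adjCone2 E e y + adjCone E e = adjCone2 E e y :=
  stmt_3_general E hE e he y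
end

section
/- Let $U \subseteq \mathbb{R}^m$ be closed, $T > 0$, and let $\bar{u} : [0,T] \to U$ be measurable with $\bar u \in L^2(0,T;\mathbb{R}^m)$. Let $v \in L^2(0,T;\mathbb{R}^m)$ satisfy $v(t) \in T_U^\flat(\bar{u}(t))$ for a.e. $t \in [0,T]$. Then $v$ belongs to the adjacent cone $T_{\mathcal{U}_2}^\flat(\bar{u})$ of the set $\mathcal{U}_2 := \{u \in L^2(0,T;\mathbb{R}^m) : u(t) \in U \text{ a.e.}\}$ at $\bar{u}$ (with respect to the $L^2$ norm). -/
open Filter Metric Set MeasureTheory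

/-! For `h > 0` the distance from `v` to `(𝒰 - ū) / h` is `h⁻¹ · dist(ū + h v, 𝒰)`, where
`𝒰 = {u | u t ∈ U a.e.}`. In `Lp` (`p < ∞`, finite measure) the distance from `x` to `𝒰` is at
most the `Lp` norm of `t ↦ infDist (x t) U`: the nearest points to `x t` among the first `N`
terms of a dense sequence of `U` are measurable selections of `U`, and their errors converge to
that norm by dominated convergence. So `dist(v, (𝒰 - ū) / h)` is bounded by the `Lp` norm of
`t ↦ h⁻¹ · infDist (ū t + h v t) U`, which tends to `0` a.e. because `v t ∈ T_U^♭(ū t)` and is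
dominated by `‖v t‖` because `ū t ∈ U`; dominated convergence once more concludes. -/

open scoped ENNReal Topology Pointwise

theorem tendsto_eLpNorm_of_dominated {ι α E : Type*} [MeasurableSpace α] {μ : Measure α}
    [NormedAddCommGroup E] {p : ℝ≥0∞} (hp0 : p ≠ 0) (hp : p ≠ ∞) {l : Filter ι}
    [l.IsCountablyGenerated] {f : ι → α → E} {g : α → E} {bound : α → ℝ}
    (hbound : MemLp bound p μ) (hf_meas : ∀ᶠ i in l, AEStronglyMeasurable (f i) μ)
    (hf_le : ∀ᶠ i in l, ∀ᵐ a ∂μ, ‖f i a‖ ≤ bound a)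
    (hf_lim : ∀ᵐ a ∂μ, Tendsto (fun i => f i a) l (𝓝 (g a))) :
    Tendsto (fun i => eLpNorm (f i) p μ) l (𝓝 (eLpNorm g p μ)) := by
  simp only [eLpNorm_eq_lintegral_rpow_enorm_toReal hp0 hp]
  refine (ENNReal.continuous_rpow_const.tendsto _).comp
    (tendsto_lintegral_filter_of_dominated_convergence' (fun a => ‖bound a‖ₑ ^ p.toReal) ?_ ?_
      (lintegral_rpow_enorm_lt_top_of_eLpNorm_lt_top hp0 hp hbound.eLpNorm_lt_top).ne ?_)
  · filter_upwards [hf_meas] with i hi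
    exact hi.enorm.pow_const _
  · filter_upwards [hf_le] with i hi
    filter_upwards [hi] with a ha
    gcongr
    exact enorm_le_iff_norm_le.2 (ha.trans (le_abs_self _))
  · filter_upwards [hf_lim] with a ha
    exact (ENNReal.continuous_rpow_const.tendsto _).comp (continuous_enorm.tendsto _ |>.comp ha)

theorem infDist_image_inv_smul_sub {E : Type*} [NormedAddCommGroup E] [NormedSpace ℝ E]
    (S : Set E) (x z : E) {h : ℝ} (hh : 0 < h) :
    infDist z ((fun k => h⁻¹ • (k - x)) '' S) = h⁻¹ * infDist (x + h • z) S := by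
  have hz : z = h⁻¹ • ((x + h • z) - x) := by
    rw [add_sub_cancel_left, inv_smul_smul₀ hh.ne']
  have himg : (fun k => h⁻¹ • (k - x)) '' S = h⁻¹ • ((· - x) '' S) := by
    rw [← Set.image_smul, Set.image_image]
  conv_lhs => rw [himg, hz]
  rw [infDist_smul₀ (inv_ne_zero hh.ne'), norm_inv, Real.norm_of_nonneg hh.le,
    infDist_image (Φ := (· - x)) (.of_dist_eq fun a b => dist_sub_right a b x)]

theorem mem_adjCone_iff {X : Type*} [NormedAddCommGroup X] [NormedSpace ℝ X] {K : Set X}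
    {x v : X} :
    v ∈ adjCone K x ↔ Tendsto (fun h => h⁻¹ * infDist (x + h • v) K) (𝓝[>] 0) (𝓝 0) := by
  refine tendsto_congr' ?_
  filter_upwards [self_mem_nhdsWithin] with h hh
  exact infDist_image_inv_smul_sub K x v hh

theorem dist_nearestPt_le {E : Type*} [MeasurableSpace E] [PseudoMetricSpace E]
    [OpensMeasurableSpace E] (e : ℕ → E) (x : E) {k N : ℕ} (hkN : k ≤ N) :
    dist (SimpleFunc.nearestPt e N x) x ≤ dist (e k) x := by
  simpa only [edist_dist, ENNReal.ofReal_le_ofReal_iff dist_nonneg]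
    using SimpleFunc.edist_nearestPt_le e x hkN

theorem tendsto_dist_nearestPt {E : Type*} [MeasurableSpace E] [PseudoMetricSpace E]
    [OpensMeasurableSpace E] (e : ℕ → E) (x : E) :
    Tendsto (fun N => dist (SimpleFunc.nearestPt e N x) x) atTop (𝓝 (infDist x (range e))) := by
  refine Metric.tendsto_atTop.2 fun ε hε => ?_
  obtain ⟨_, ⟨k, rfl⟩, hk⟩ := (infDist_lt_iff (range_nonempty e)).1 (lt_add_of_pos_right _ hε)
  refine ⟨k, fun N hN => ?_⟩
  have hinf : infDist x (range e) ≤ dist (SimpleFunc.nearestPt e N x) x := by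
    rw [dist_comm]
    exact infDist_le_dist_of_mem ⟨SimpleFunc.nearestPtInd e N x, rfl⟩
  rw [Real.dist_eq, abs_lt]
  constructor <;> linarith [dist_nearestPt_le e x hN, dist_comm x (e k)]

theorem exists_seq_range_subset_subset_closure {E : Type*} [TopologicalSpace E]
    [SecondCountableTopology E] {U : Set E} (hU : U.Nonempty) :
    ∃ e : ℕ → E, range e ⊆ U ∧ U ⊆ closure (range e) := by
  have := hU.to_subtype
  obtain ⟨u, hu⟩ := TopologicalSpace.exists_dense_seq U
  refine ⟨(↑) ∘ u, ?_, ?_⟩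
  · rintro _ ⟨k, rfl⟩
    exact (u k).2
  · rw [range_comp]
    exact Subtype.dense_iff.1 hu

theorem inv_mul_infDist_add_smul_le {E : Type*} [NormedAddCommGroup E] [NormedSpace ℝ E]
    {U : Set E} {x : E} (hx : x ∈ U) (v : E) {h : ℝ} (hh : 0 < h) :
    h⁻¹ * infDist (x + h • v) U ≤ ‖v‖ := by
  rw [inv_mul_le_iff₀ hh]
  calc infDist (x + h • v) U ≤ dist (x + h • v) x := infDist_le_dist_of_mem hx
    _ = h * ‖v‖ := by rw [dist_eq_norm, add_sub_cancel_left, norm_smul, Real.norm_of_nonneg hh.le]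

section LpConstraint

variable {α E : Type*} [MeasurableSpace α] {μ : Measure α} [NormedAddCommGroup E]
  {p : ℝ≥0∞} [Fact (1 ≤ p)]

theorem ofReal_infDist_setOf_ae_mem_le_eLpNorm_sub {U : Set E} (x : Lp E p μ) {f : α → E}
    (hf : MemLp f p μ) (hfU : ∀ᵐ t ∂μ, f t ∈ U) :
    ENNReal.ofReal (infDist x {u : Lp E p μ | ∀ᵐ t ∂μ, u t ∈ U}) ≤
      eLpNorm (fun t => x t - f t) p μ := by
  have hmem : hf.toLp f ∈ {u : Lp E p μ | ∀ᵐ t ∂μ, u t ∈ U} := by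
    filter_upwards [hf.coeFn_toLp, hfU] with t ht htU
    rwa [ht]
  calc ENNReal.ofReal (infDist x _) ≤ ‖x - hf.toLp f‖ₑ := by
        rw [← ofReal_norm, ← dist_eq_norm]
        exact ENNReal.ofReal_le_ofReal (infDist_le_dist_of_mem hmem)
    _ = eLpNorm (fun t => x t - f t) p μ := by
        rw [Lp.enorm_def]
        refine eLpNorm_congr_ae ?_
        filter_upwards [Lp.coeFn_sub x (hf.toLp f), hf.coeFn_toLp] with t h1 h2
        rw [h1, Pi.sub_apply, h2]

theorem tendsto_eLpNorm_inv_mul_infDist_add_smul [NormedSpace ℝ E] (hp : p ≠ ∞) {U : Set E}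
    {ubar v : Lp E p μ} (hubar : ∀ᵐ t ∂μ, ubar t ∈ U) (hv : ∀ᵐ t ∂μ, v t ∈ adjCone U (ubar t)) :
    Tendsto (fun h => eLpNorm (fun t => h⁻¹ * infDist (ubar t + h • v t) U) p μ) (𝓝[>] 0)
      (𝓝 0) := by
  have hp0 : p ≠ 0 := (zero_lt_one.trans_le Fact.out).ne'
  have hmeas : ∀ h : ℝ, AEStronglyMeasurable (fun t => h⁻¹ * infDist (ubar t + h • v t) U) μ :=
    fun h => (continuous_const.mul (continuous_infDist_pt U)).comp_aestronglyMeasurable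
      ((Lp.aestronglyMeasurable ubar).add ((Lp.aestronglyMeasurable v).const_smul h))
  have hle : ∀ᶠ h in 𝓝[>] 0, ∀ᵐ t ∂μ, ‖h⁻¹ * infDist (ubar t + h • v t) U‖ ≤ ‖v t‖ := by
    filter_upwards [self_mem_nhdsWithin] with h hh
    filter_upwards [hubar] with t ht
    rw [Real.norm_of_nonneg (mul_nonneg (inv_nonneg.2 hh.out.le) infDist_nonneg)]
    exact inv_mul_infDist_add_smul_le ht (v t) hh.out
  simpa using tendsto_eLpNorm_of_dominated (g := 0) hp0 hp (Lp.memLp v).norm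
    (.of_forall hmeas) hle (hv.mono fun t ht => mem_adjCone_iff.1 ht)

variable [IsFiniteMeasure μ] [MeasurableSpace E] [BorelSpace E] [SecondCountableTopology E]

theorem ofReal_infDist_setOf_ae_mem_le (hp : p ≠ ∞) (U : Set E) (x : Lp E p μ) :
    ENNReal.ofReal (infDist x {u : Lp E p μ | ∀ᵐ t ∂μ, u t ∈ U}) ≤
      eLpNorm (fun t => infDist (x t) U) p μ := by
  rcases U.eq_empty_or_nonempty with rfl | hU
  · have : infDist x {u : Lp E p μ | ∀ᵐ t ∂μ, u t ∈ (∅ : Set E)} = 0 := by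
      rcases eq_empty_or_nonempty {u : Lp E p μ | ∀ᵐ t ∂μ, u t ∈ (∅ : Set E)} with h | ⟨w, hw⟩
      · rw [h, infDist_empty]
      -- `w` witnesses `∀ᵐ t ∂μ, False`, so every `u` lies in the set
      · refine infDist_zero_of_mem (mem_ofPred.2 ?_)
        exact (mem_ofPred.1 hw).mono fun _ ht => (notMem_empty _ ht).elim
    rw [this, ENNReal.ofReal_zero]
    exact zero_le
  obtain ⟨e, heU, hUe⟩ := exists_seq_range_subset_subset_closure hU
  set f : ℕ → α → E := fun N t => SimpleFunc.nearestPt e N (x t)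
  have hf_meas : ∀ N, AEStronglyMeasurable (f N) μ := fun N =>
    ((SimpleFunc.nearestPt e N).measurable.comp_aemeasurable
      (Lp.aestronglyMeasurable x).aemeasurable).aestronglyMeasurable
  have hf_le : ∀ N t, ‖x t - f N t‖ ≤ ‖x t - e 0‖ := fun N t => by
    simpa only [dist_eq_norm'] using dist_nearestPt_le e (x t) (Nat.zero_le N)
  have hbound : MemLp (fun t => ‖x t - e 0‖) p μ := ((Lp.memLp x).sub (memLp_const _)).norm
  have hf_memLp : ∀ N, MemLp (f N) p μ := fun N => by
    have : MemLp (fun t => x t - f N t) p μ := hbound.of_le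
      ((Lp.aestronglyMeasurable x).sub (hf_meas N)) (.of_forall fun t => by simpa using hf_le N t)
    convert (Lp.memLp x).sub this using 1
    funext t
    simp
  have hdist : ∀ N, ENNReal.ofReal (infDist x {u : Lp E p μ | ∀ᵐ t ∂μ, u t ∈ U}) ≤
      eLpNorm (fun t => ‖x t - f N t‖) p μ := fun N => by
    simpa only [eLpNorm_norm] using ofReal_infDist_setOf_ae_mem_le_eLpNorm_sub x (hf_memLp N)
      (.of_forall fun t => heU ⟨_, rfl⟩)
  have hlim : ∀ t, Tendsto (fun N => ‖x t - f N t‖) atTop (𝓝 (infDist (x t) U)) := fun t => by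
    have := tendsto_dist_nearestPt e (x t)
    have hcl : closure (range e) = closure U :=
      (closure_mono heU).antisymm (closure_minimal hUe isClosed_closure)
    rw [← infDist_closure, hcl, infDist_closure] at this
    simpa only [dist_eq_norm'] using this
  exact ge_of_tendsto' (tendsto_eLpNorm_of_dominated (zero_lt_one.trans_le Fact.out).ne' hp
    hbound (.of_forall fun N => (Lp.aestronglyMeasurable x).sub (hf_meas N) |>.norm)
    (.of_forall fun N => .of_forall fun t => by simpa using hf_le N t) (.of_forall hlim)) hdist

theorem mem_adjCone_setOf_ae_mem [NormedSpace ℝ E] (hp : p ≠ ∞)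
    {U : Set E} {ubar v : Lp E p μ} (hubar : ∀ᵐ t ∂μ, ubar t ∈ U)
    (hv : ∀ᵐ t ∂μ, v t ∈ adjCone U (ubar t)) :
    v ∈ adjCone {u : Lp E p μ | ∀ᵐ t ∂μ, u t ∈ U} ubar := by
  set g : ℝ → α → ℝ := fun h t => h⁻¹ * infDist (ubar t + h • v t) U
  have hg := tendsto_eLpNorm_inv_mul_infDist_add_smul hp hubar hv
  have hbound : ∀ h > 0, ENNReal.ofReal
      (h⁻¹ * infDist (ubar + h • v) {u : Lp E p μ | ∀ᵐ t ∂μ, u t ∈ U}) ≤ eLpNorm (g h) p μ := by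
    intro h hh
    have hcoe : (fun t => infDist ((ubar + h • v : Lp E p μ) t) U) =ᵐ[μ]
        fun t => infDist (ubar t + h • v t) U := by
      filter_upwards [Lp.coeFn_add ubar (h • v), Lp.coeFn_smul h v] with t h1 h2
      rw [h1, Pi.add_apply, h2, Pi.smul_apply]
    calc ENNReal.ofReal (h⁻¹ * infDist (ubar + h • v) _)
        = ‖h⁻¹‖ₑ * ENNReal.ofReal (infDist (ubar + h • v) _) := by
          rw [ENNReal.ofReal_mul (by positivity), Real.enorm_of_nonneg (by positivity)]
      _ ≤ ‖h⁻¹‖ₑ * eLpNorm (fun t => infDist (ubar t + h • v t) U) p μ := by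
          rw [← eLpNorm_congr_ae hcoe]
          gcongr
          exact ofReal_infDist_setOf_ae_mem_le hp U _
      _ = eLpNorm (g h) p μ := (eLpNorm_const_smul _ _ _ _).symm
  rw [mem_adjCone_iff]
  have hofReal := tendsto_of_tendsto_of_tendsto_of_le_of_le' tendsto_const_nhds hg
    (.of_forall fun _ => zero_le) (eventually_mem_nhdsWithin.mono hbound)
  refine ((ENNReal.tendsto_toReal ENNReal.zero_ne_top).comp hofReal).congr' ?_
  filter_upwards [self_mem_nhdsWithin] with h hh
  exact ENNReal.toReal_ofReal (mul_nonneg (inv_nonneg.2 hh.out.le) infDist_nonneg)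

end LpConstraint

theorem stmt_8_general (m : ℕ) (T : ℝ)
    (U : Set (EuclideanSpace ℝ (Fin m)))
    (μ : Measure ℝ) (hμ : μ = volume.restrict (Set.Icc 0 T))
    (ubar v : Lp (EuclideanSpace ℝ (Fin m)) 2 μ)
    (hubar : ∀ᵐ t ∂μ, ubar t ∈ U)
    (hv : ∀ᵐ t ∂μ, v t ∈ adjCone U (ubar t)) :
    v ∈ adjCone {u : Lp (EuclideanSpace ℝ (Fin m)) 2 μ | ∀ᵐ t ∂μ, u t ∈ U} ubar := by
  subst hμ
  exact mem_adjCone_setOf_ae_mem ENNReal.ofNat_ne_top hubar hv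

theorem stmt_8 (m : ℕ) (T : ℝ) (hT : 0 < T)
    (U : Set (EuclideanSpace ℝ (Fin m))) (hU : IsClosed U)
    (μ : Measure ℝ) (hμ : μ = volume.restrict (Set.Icc 0 T))
    (ubar v : Lp (EuclideanSpace ℝ (Fin m)) 2 μ)
    (hubar : ∀ᵐ t ∂μ, ubar t ∈ U)
    (hv : ∀ᵐ t ∂μ, v t ∈ adjCone U (ubar t)) :
    v ∈ adjCone {u : Lp (EuclideanSpace ℝ (Fin m)) 2 μ | ∀ᵐ t ∂μ, u t ∈ U} ubar :=
  stmt_8_general m T U μ hμ ubar v hubar hv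
end

section
/- Let $U \subseteq \mathbb{R}^m$ be closed, $\bar{u} \in L^2(0,T;\mathbb{R}^m)$ with $\bar u(t) \in U$ a.e., and $v \in L^2(0,T;\mathbb{R}^m)$ with $v(t) \in T_U^\flat(\bar{u}(t))$ a.e. Suppose there exist $\epsilon_0 > 0$ and $\ell \in L^2(0,T;\mathbb{R}^m)$ (scalar-valued bound $\ell(t) \ge 0$) such that $\mathrm{dist}_U(\bar{u}(t) + \epsilon v(t)) \le \epsilon^2 \ell(t)$ for all $\epsilon \in [0,\epsilon_0]$ and a.e. $t$. Let $\sigma \in L^2(0,T;\mathbb{R}^m)$ satisfy $\sigma(t) \in T_U^{\flat(2)}(\bar{u}(t), v(t))$ a.e. Then for every $\epsilon \in (0, \epsilon_0]$ there exists a measurable $\sigma_\epsilon \in L^2(0,T;\mathbb{R}^m)$ such that $\bar{u}(t) + \epsilon v(t) + \epsilon^2 \sigma_\epsilon(t) \in U$ a.e., $\sigma_\epsilon(t) \to \sigma(t)$ a.e. as $\epsilon \to 0^+$, and $\|\sigma_\epsilon\|_{L^2} \le \|\ell\|_{L^2} + 2\|\sigma\|_{L^2}$. -/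
/-!
The key tool is a measurable nearest-point map `Φ` onto the closed set `U`. It is built as in the
Kuratowski–Ryll-Nardzewski selection theorem: along a dense sequence `u` of `U`, choose for each
`x` the first centre `u k` whose ball of radius `2⁻ⁿ` meets the set of points of `U` nearest to `x`
inside the previous ball; each choice is a measurable function of `x`, the centres form a
Cauchy sequence, and their limit is a nearest point.

Then `σ_ε = ε⁻² (Φ (ū + εv + ε²σ) - ū - εv)` works: `ū + εv + ε²σ_ε = Φ (ū + εv + ε²σ) ∈ U`, and
`‖σ_ε - σ‖ = ε⁻² dist_U (ū + εv + ε²σ)`. By the triangle inequality this is at most `ℓ + ‖σ‖`,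
and it equals the distance from `σ` to `(U - ū - εv)/ε²`, which tends to `0` precisely because
`σ ∈ T_U^{♭(2)}(ū, v)`.
-/

open Filter Metric Set MeasureTheory

open Topology
open scoped Pointwise

lemma measurable_sInf_setOf_nat {α : Type*} [MeasurableSpace α] {p : α → ℕ → Prop}
    (hp : ∀ k, MeasurableSet {x | p x k}) : Measurable fun x => sInf {k | p x k} := by
  classical
  refine measurable_to_countable' fun k => ?_
  have : (fun x => sInf {k | p x k}) ⁻¹' {k} =
      ({x | p x k} ∩ ⋂ j < k, {x | p x j}ᶜ) ∪ ({x | k = 0} ∩ ⋂ j, {x | p x j}ᶜ) := by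
    ext x
    by_cases h : ∃ j, p x j
    · have h' : {j | p x j}.Nonempty := h
      simp only [mem_preimage, mem_singleton_iff, Nat.sInf_def h']
      simpa [not_forall_not.mpr h] using Nat.find_eq_iff h
    · simp_all [eq_comm]
  rw [this]
  exact ((hp k).inter (.biInter (to_countable _) fun j _ => (hp j).compl)).union
    ((MeasurableSet.const _).inter (.iInter fun j => (hp j).compl))

section NearestPoints

variable {X : Type*} [MetricSpace X]

def nearestPoints (U : Set X) (x : X) : Set X := {a ∈ U | dist x a = infDist x U}

lemma IsClosed.nearestPoints_nonempty [ProperSpace X] {U : Set X} (hU : IsClosed U)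
    (hne : U.Nonempty) (x : X) : (nearestPoints U x).Nonempty := by
  obtain ⟨a, ha, h⟩ := hU.exists_infDist_eq_dist hne x
  exact ⟨a, ha, h.symm⟩

lemma measurableSet_nearestPoints_inter_nonempty [ProperSpace X] [MeasurableSpace X]
    [OpensMeasurableSpace X] {U C : Set X} (hU : IsClosed U) (hC : IsClosed C) :
    MeasurableSet {x | (nearestPoints U x ∩ C).Nonempty} := by
  rcases (U ∩ C).eq_empty_or_nonempty with h | h
  · convert MeasurableSet.empty
    refine eq_empty_of_forall_notMem fun x ⟨a, ⟨haU, _⟩, haC⟩ => ?_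
    exact h.subset ⟨haU, haC⟩
  · -- a nearest point of `U` lying in `C` exists iff `U ∩ C` is as close to `x` as `U` is
    convert measurableSet_le (measurable_infDist (s := U ∩ C)) (measurable_infDist (s := U))
      using 1
    ext x
    constructor
    · rintro ⟨a, ⟨haU, hxa⟩, haC⟩
      rw [mem_ofPred_eq, ← hxa]
      exact infDist_le_dist_of_mem ⟨haU, haC⟩
    · intro hle
      obtain ⟨a, ha, hxa⟩ := (hU.inter hC).exists_infDist_eq_dist h x
      exact ⟨a, ⟨ha.1, le_antisymm (hxa ▸ hle) (infDist_le_dist_of_mem ha.1)⟩, ha.2⟩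

section Construction

variable (U : Set X) (u : ℕ → X)

-- `sInf ∅ = 0` is a junk value, never reached along `nearestIndexSeq` when `u` is dense in `U`.
noncomputable def nextIndex (ρ : ℝ) (C : Set X) (x : X) : ℕ :=
  sInf {k | (nearestPoints U x ∩ closedBall (u k) ρ ∩ C).Nonempty}

noncomputable def nearestIndexSeq (x : X) : ℕ → ℕ
  | 0 => nextIndex U u 1 univ x
  | n + 1 =>
    nextIndex U u ((1 / 2) ^ (n + 1)) (closedBall (u (nearestIndexSeq x n)) ((1 / 2) ^ n)) x

variable {U u}

lemma nearestPoints_inter_closedBall_nextIndex (hu : U ⊆ closure (range u)) {ρ : ℝ} (hρ : 0 < ρ)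
    {C : Set X} {x : X} (hC : (nearestPoints U x ∩ C).Nonempty) :
    (nearestPoints U x ∩ closedBall (u (nextIndex U u ρ C x)) ρ ∩ C).Nonempty := by
  obtain ⟨a, ha, haC⟩ := hC
  obtain ⟨k, hk⟩ := mem_closure_range_iff.1 (hu ha.1) ρ hρ
  exact Nat.sInf_mem (s := {k | (nearestPoints U x ∩ closedBall (u k) ρ ∩ C).Nonempty})
    ⟨k, a, ⟨ha, mem_closedBall.2 (dist_comm a (u k) ▸ hk.le)⟩, haC⟩

lemma nearestPoints_inter_closedBall_nearestIndexSeq_nonempty [ProperSpace X] (hU : IsClosed U)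
    (hne : U.Nonempty) (hu : U ⊆ closure (range u)) (x : X) (n : ℕ) :
    (nearestPoints U x ∩ closedBall (u (nearestIndexSeq U u x n)) ((1 / 2) ^ n)).Nonempty := by
  induction n with
  | zero =>
    simpa [nearestIndexSeq] using nearestPoints_inter_closedBall_nextIndex hu one_pos
      (C := univ) (by simpa using hU.nearestPoints_nonempty hne x)
  | succ n ih =>
    exact (nearestPoints_inter_closedBall_nextIndex hu (by positivity) ih).mono inter_subset_left

lemma dist_nearestIndexSeq_succ_le [ProperSpace X] (hU : IsClosed U)
    (hne : U.Nonempty) (hu : U ⊆ closure (range u)) (x : X) (n : ℕ) :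
    dist (u (nearestIndexSeq U u x n)) (u (nearestIndexSeq U u x (n + 1))) ≤ 2 * (1 / 2) ^ n := by
  obtain ⟨a, ⟨-, ha⟩, ha'⟩ := nearestPoints_inter_closedBall_nextIndex hu
    (pow_pos (by norm_num : (0 : ℝ) < 1 / 2) (n + 1))
    (nearestPoints_inter_closedBall_nearestIndexSeq_nonempty hU hne hu x n)
  calc _ ≤ dist (u (nearestIndexSeq U u x n)) a + dist a (u (nearestIndexSeq U u x (n + 1))) :=
        dist_triangle _ _ _
    _ ≤ (1 / 2) ^ n + (1 / 2) ^ (n + 1) := add_le_add (dist_comm a _ ▸ ha') ha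
    _ ≤ 2 * (1 / 2) ^ n := by rw [pow_succ]; linarith [pow_nonneg (by norm_num : (0 : ℝ) ≤ 1 / 2) n]

lemma measurable_nextIndex [ProperSpace X] [MeasurableSpace X] [OpensMeasurableSpace X]
    (hU : IsClosed U) (ρ : ℝ) {C : Set X} (hC : IsClosed C) :
    Measurable fun x => nextIndex U u ρ C x :=
  measurable_sInf_setOf_nat fun k => by
    simpa only [inter_assoc] using
      measurableSet_nearestPoints_inter_nonempty hU (isClosed_closedBall.inter hC)

lemma measurable_nearestIndexSeq [ProperSpace X] [MeasurableSpace X] [OpensMeasurableSpace X]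
    (hU : IsClosed U) (n : ℕ) : Measurable fun x => nearestIndexSeq U u x n := by
  induction n with
  | zero => exact measurable_nextIndex hU 1 isClosed_univ
  | succ n ih =>
    have hstep : Measurable fun q : X × ℕ =>
        nextIndex U u ((1 / 2) ^ (n + 1)) (closedBall (u q.2) ((1 / 2) ^ n)) q.1 :=
      measurable_from_prod_countable_left fun p =>
        measurable_nextIndex hU _ (C := closedBall (u p) ((1 / 2) ^ n)) isClosed_closedBall
    have hpair : Measurable fun x => (x, nearestIndexSeq U u x n) := measurable_id.prodMk ih
    exact (hstep.comp hpair :)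

end Construction

theorem IsClosed.exists_measurable_nearestPoint [ProperSpace X] [MeasurableSpace X] [BorelSpace X]
    {U : Set X} (hU : IsClosed U) (hne : U.Nonempty) :
    ∃ Φ : X → X, Measurable Φ ∧ ∀ x, Φ x ∈ nearestPoints U x := by
  obtain ⟨t, htU, htc, hUt⟩ :=
    (TopologicalSpace.IsSeparable.of_separableSpace U).exists_countable_dense_subset
  obtain ⟨u, rfl⟩ := htc.exists_eq_range (closure_nonempty_iff.1 (hne.mono hUt))
  have : Nonempty X := ⟨hne.some⟩
  set c : ℕ → X → X := fun n x => u (nearestIndexSeq U u x n)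
  have hc : ∀ x, Tendsto (c · x) atTop (𝓝 (limUnder atTop (c · x))) := fun x =>
    (cauchySeq_of_le_geometric (1 / 2) 2 (by norm_num)
      (dist_nearestIndexSeq_succ_le hU hne hUt x)).tendsto_limUnder
  refine ⟨fun x => limUnder atTop (c · x),
    measurable_of_tendsto_metrizable' atTop
      (fun n => measurable_from_nat.comp (measurable_nearestIndexSeq hU n)) (tendsto_pi_nhds.2 hc),
    fun x => ?_⟩
  have hmem : limUnder atTop (c · x) ∈ U :=
    hU.mem_of_tendsto (hc x) (.of_forall fun n => htU (mem_range_self _))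
  refine ⟨hmem, le_antisymm ?_ (infDist_le_dist_of_mem hmem)⟩
  have hr : Tendsto (fun n : ℕ => infDist x U + (1 / 2 : ℝ) ^ n) atTop (𝓝 (infDist x U)) := by
    simpa using tendsto_const_nhds.add (tendsto_pow_atTop_nhds_zero_of_lt_one
      (by norm_num : (0 : ℝ) ≤ 1 / 2) (by norm_num))
  refine le_of_tendsto_of_tendsto' (tendsto_const_nhds.dist (hc x)) hr fun n => ?_
  obtain ⟨a, ⟨-, ha⟩, hac⟩ := nearestPoints_inter_closedBall_nearestIndexSeq_nonempty hU hne hUt x n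
  calc dist x (c n x) ≤ dist x a + dist a (c n x) := dist_triangle _ _ _
    _ ≤ infDist x U + (1 / 2) ^ n := by rw [ha]; exact add_le_add_right (mem_closedBall.1 hac) _

end NearestPoints

lemma infDist_image_smul_sub {E : Type*} [NormedAddCommGroup E] [NormedSpace ℝ E]
    {c : ℝ} (hc : c ≠ 0) (a y : E) (U : Set E) :
    infDist y ((fun k => c • (k - a)) '' U) = |c| * infDist (a + c⁻¹ • y) U := by
  have himage : (fun k => c • (k - a)) '' U = c • ((· - a) '' U) := by
    rw [← image_smul, image_image]
  rw [himage, ← smul_inv_smul₀ hc y, infDist_smul₀ hc, Real.norm_eq_abs, inv_smul_smul₀ hc,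
    ← infDist_image (IsometryEquiv.subRight a).isometry (x := a + c⁻¹ • y)]
  simp

section SecondOrderCorrection

variable {E : Type*} [NormedAddCommGroup E] [NormedSpace ℝ E]

noncomputable def secondOrderCorrection (Φ : E → E) (x v σ : E) (ε : ℝ) : E :=
  (ε ^ 2)⁻¹ • (Φ (x + ε • v + ε ^ 2 • σ) - x - ε • v)

variable {Φ : E → E} {U : Set E} {x v σ : E} {ε : ℝ}

lemma add_add_sq_smul_secondOrderCorrection (hε : ε ≠ 0) :
    x + ε • v + ε ^ 2 • secondOrderCorrection Φ x v σ ε = Φ (x + ε • v + ε ^ 2 • σ) := by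
  rw [secondOrderCorrection, smul_inv_smul₀ (pow_ne_zero 2 hε)]
  abel

lemma norm_secondOrderCorrection_sub (hΦ : ∀ y, Φ y ∈ nearestPoints U y) (hε : ε ≠ 0) :
    ‖secondOrderCorrection Φ x v σ ε - σ‖ = (ε ^ 2)⁻¹ * infDist (x + ε • v + ε ^ 2 • σ) U := by
  have hε2 : ε ^ 2 ≠ 0 := pow_ne_zero 2 hε
  have : secondOrderCorrection Φ x v σ ε - σ =
      (ε ^ 2)⁻¹ • (Φ (x + ε • v + ε ^ 2 • σ) - (x + ε • v + ε ^ 2 • σ)) := by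
    simp only [secondOrderCorrection, smul_sub, smul_add, inv_smul_smul₀ hε2]
    abel
  rw [this, norm_smul, ← dist_eq_norm, dist_comm, (hΦ _).2, Real.norm_of_nonneg (by positivity)]

lemma norm_secondOrderCorrection_le (hΦ : ∀ y, Φ y ∈ nearestPoints U y) (hε : ε ≠ 0) {L : ℝ}
    (hL : infDist (x + ε • v) U ≤ ε ^ 2 * L) : ‖secondOrderCorrection Φ x v σ ε‖ ≤ L + 2 * ‖σ‖ := by
  have hε2 : 0 < ε ^ 2 := by positivity
  have hp : infDist (x + ε • v + ε ^ 2 • σ) U ≤ ε ^ 2 * (L + ‖σ‖) := by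
    calc infDist (x + ε • v + ε ^ 2 • σ) U
        ≤ infDist (x + ε • v) U + dist (x + ε • v + ε ^ 2 • σ) (x + ε • v) :=
          infDist_le_infDist_add_dist
      _ ≤ ε ^ 2 * (L + ‖σ‖) := by
          rw [dist_self_add_left, norm_smul, Real.norm_of_nonneg hε2.le]; linarith
  have hsub : ‖secondOrderCorrection Φ x v σ ε - σ‖ ≤ L + ‖σ‖ := by
    rw [norm_secondOrderCorrection_sub hΦ hε, inv_mul_le_iff₀ hε2]
    exact hp
  linarith [norm_le_norm_sub_add (secondOrderCorrection Φ x v σ ε) σ]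

lemma tendsto_secondOrderCorrection (hΦ : ∀ y, Φ y ∈ nearestPoints U y)
    (hσ : σ ∈ adjCone2 U x v) :
    Tendsto (secondOrderCorrection Φ x v σ) (𝓝[>] 0) (𝓝 σ) := by
  rw [tendsto_iff_norm_sub_tendsto_zero]
  refine (hσ : Tendsto _ _ _).congr' ?_
  filter_upwards [self_mem_nhdsWithin] with ε (hε : 0 < ε)
  have hc : (ε ^ 2)⁻¹ ≠ 0 := by positivity
  simp_rw [sub_sub]
  rw [infDist_image_smul_sub hc, abs_of_pos (by positivity), inv_inv,
    norm_secondOrderCorrection_sub hΦ hε.ne']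

lemma Measurable.aestronglyMeasurable_secondOrderCorrection [ProperSpace E] [MeasurableSpace E]
    [BorelSpace E] {α : Type*} [MeasurableSpace α] {μ : Measure α} (hΦ : Measurable Φ)
    {x v σ : α → E} (hx : AEStronglyMeasurable x μ) (hv : AEStronglyMeasurable v μ)
    (hσ : AEStronglyMeasurable σ μ) (ε : ℝ) :
    AEStronglyMeasurable (fun t => secondOrderCorrection Φ (x t) (v t) (σ t) ε) μ := by
  have hp : AEStronglyMeasurable (fun t => x t + ε • v t + ε ^ 2 • σ t) μ :=
    (hx.add (hv.const_smul ε)).add (hσ.const_smul _)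
  exact (((hΦ.comp_aemeasurable hp.aemeasurable).aestronglyMeasurable.sub hx).sub
    (hv.const_smul ε)).const_smul _

end SecondOrderCorrection

lemma eLpNorm_le_eLpNorm_add_two_mul {α E F : Type*} [MeasurableSpace α] {μ : Measure α}
    [NormedAddCommGroup E] [NormedAddCommGroup F] {p : ENNReal} (hp : 1 ≤ p)
    {f : α → F} {ℓ : α → ℝ} {g : α → E} (hℓ : AEStronglyMeasurable ℓ μ)
    (hg : AEStronglyMeasurable g μ) (hf : ∀ᵐ t ∂μ, ‖f t‖ ≤ ℓ t + 2 * ‖g t‖) :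
    eLpNorm f p μ ≤ eLpNorm ℓ p μ + 2 * eLpNorm g p μ :=
  calc eLpNorm f p μ ≤ eLpNorm (fun t => ℓ t + 2 * ‖g t‖) p μ :=
        eLpNorm_mono_ae_real hf
    _ ≤ eLpNorm ℓ p μ + eLpNorm (fun t => 2 * ‖g t‖) p μ :=
        eLpNorm_add_le hℓ (hg.norm.const_mul 2) hp
    _ = eLpNorm ℓ p μ + 2 * eLpNorm g p μ := by
        rw [show (fun t => 2 * ‖g t‖) = (2 : ℝ) • fun t => ‖g t‖ from rfl,
          eLpNorm_const_smul, eLpNorm_norm]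
        norm_num [Real.enorm_eq_ofReal_abs]

theorem stmt_9_general (m : ℕ)
    (U : Set (EuclideanSpace ℝ (Fin m))) (hU : IsClosed U)
    (μ : Measure ℝ)
    (ubar v σ : ℝ → EuclideanSpace ℝ (Fin m)) (ℓ : ℝ → ℝ)
    (hubar2 : MemLp ubar 2 μ) (hv2 : MemLp v 2 μ) (hσ2 : MemLp σ 2 μ) (hℓ2 : MemLp ℓ 2 μ)
    (hubarU : ∀ᵐ t ∂μ, ubar t ∈ U)
    (ε₀ : ℝ)
    (hdist : ∀ ε ∈ Set.Icc (0 : ℝ) ε₀, ∀ᵐ t ∂μ,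
      Metric.infDist (ubar t + ε • v t) U ≤ ε ^ 2 * ℓ t)
    (hσt : ∀ᵐ t ∂μ, σ t ∈ adjCone2 U (ubar t) (v t)) :
    ∃ σ' : ℝ → ℝ → EuclideanSpace ℝ (Fin m),
      (∀ ε ∈ Set.Ioc (0 : ℝ) ε₀,
        MemLp (σ' ε) 2 μ ∧
        (∀ᵐ t ∂μ, ubar t + ε • v t + ε ^ 2 • σ' ε t ∈ U) ∧
        eLpNorm (σ' ε) 2 μ ≤ eLpNorm ℓ 2 μ + 2 * eLpNorm σ 2 μ) ∧
      (∀ᵐ t ∂μ, Tendsto (fun ε => σ' ε t) (nhdsWithin 0 (Set.Ioi 0)) (nhds (σ t))) := by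
  rcases U.eq_empty_or_nonempty with rfl | hne
  · obtain rfl : μ = 0 := by simpa using hubarU
    exact ⟨fun _ => σ, fun _ _ => ⟨memLp_measure_zero, by simp, by simp [eLpNorm_measure_zero]⟩,
      by simp⟩
  obtain ⟨Φ, hΦm, hΦ⟩ := hU.exists_measurable_nearestPoint hne
  refine ⟨fun ε t => secondOrderCorrection Φ (ubar t) (v t) (σ t) ε, fun ε ⟨hε, hεε₀⟩ => ?_, ?_⟩
  · have hbound : ∀ᵐ t ∂μ, ‖secondOrderCorrection Φ (ubar t) (v t) (σ t) ε‖ ≤ ℓ t + 2 * ‖σ t‖ :=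
      (hdist ε ⟨hε.le, hεε₀⟩).mono fun t ht => norm_secondOrderCorrection_le hΦ hε.ne' ht
    have hmeas : AEStronglyMeasurable (fun t => secondOrderCorrection Φ (ubar t) (v t) (σ t) ε) μ :=
      hΦm.aestronglyMeasurable_secondOrderCorrection hubar2.1 hv2.1 hσ2.1 ε
    refine ⟨(hℓ2.add (hσ2.norm.const_mul 2)).of_le hmeas
        (hbound.mono fun t ht => ht.trans (Real.le_norm_self _)),
      .of_forall fun t => ?_, eLpNorm_le_eLpNorm_add_two_mul one_le_two hℓ2.1 hσ2.1 hbound⟩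
    rw [add_add_sq_smul_secondOrderCorrection hε.ne']
    exact (hΦ _).1
  · filter_upwards [hσt] with t ht using tendsto_secondOrderCorrection hΦ ht

theorem stmt_9 (m : ℕ) (T : ℝ) (hT : 0 < T)
    (U : Set (EuclideanSpace ℝ (Fin m))) (hU : IsClosed U)
    (μ : Measure ℝ) (hμ : μ = volume.restrict (Set.Icc 0 T))
    (ubar v σ : ℝ → EuclideanSpace ℝ (Fin m)) (ℓ : ℝ → ℝ)
    (hubar2 : MemLp ubar 2 μ) (hv2 : MemLp v 2 μ) (hσ2 : MemLp σ 2 μ) (hℓ2 : MemLp ℓ 2 μ)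
    (hubarU : ∀ᵐ t ∂μ, ubar t ∈ U)
    (hvt : ∀ᵐ t ∂μ, v t ∈ adjCone U (ubar t))
    (hℓ0 : ∀ᵐ t ∂μ, 0 ≤ ℓ t)
    (ε₀ : ℝ) (hε₀ : 0 < ε₀)
    (hdist : ∀ ε ∈ Set.Icc (0 : ℝ) ε₀, ∀ᵐ t ∂μ,
      Metric.infDist (ubar t + ε • v t) U ≤ ε ^ 2 * ℓ t)
    (hσt : ∀ᵐ t ∂μ, σ t ∈ adjCone2 U (ubar t) (v t)) :
    ∃ σ' : ℝ → ℝ → EuclideanSpace ℝ (Fin m),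
      (∀ ε ∈ Set.Ioc (0 : ℝ) ε₀,
        MemLp (σ' ε) 2 μ ∧
        (∀ᵐ t ∂μ, ubar t + ε • v t + ε ^ 2 • σ' ε t ∈ U) ∧
        eLpNorm (σ' ε) 2 μ ≤ eLpNorm ℓ 2 μ + 2 * eLpNorm σ 2 μ) ∧
      (∀ᵐ t ∂μ, Tendsto (fun ε => σ' ε t) (nhdsWithin 0 (Set.Ioi 0)) (nhds (σ t))) :=
  stmt_9_general m U hU μ ubar v σ ℓ hubar2 hv2 hσ2 hℓ2 hubarU ε₀ hdist hσt
end

section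
/- Let $\mathcal{X}$ be a Banach space, $E \subseteq \mathcal{X}$ convex, $\bar e \in E$, $y \in T_E^\flat(\bar e)$, and $h_1, \dots, h_N \in T_E^{\flat(2)}(\bar e, y)$. Then for every sequence $\epsilon \to 0^+$ there exist $h_l^\epsilon \to h_l$ ($l = 1,\dots,N$) with $\bar e + \epsilon y + \epsilon^2 h_l^\epsilon \in E$, and for all convex coefficients $\nu_1, \dots, \nu_N \ge 0$ with $\sum_l \nu_l = 1$, the point $\bar e + \epsilon y + \epsilon^2 \sum_{l=1}^N \nu_l h_l^\epsilon$ belongs to $E$ for all sufficiently small $\epsilon > 0$ (uniformly in $\nu$). -/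
open Filter Metric Set MeasureTheory

theorem stmt_19 {X : Type*} [NormedAddCommGroup X] [NormedSpace ℝ X] [CompleteSpace X]
    (N : ℕ) (E : Set X) (hE : Convex ℝ E) (ebar : X) (hebar : ebar ∈ E)
    (y : X) (hy : y ∈ adjCone E ebar)
    (h : Fin N → X) (hh : ∀ l, h l ∈ adjCone2 E ebar y) :
    ∀ εn : ℕ → ℝ, (∀ n, 0 < εn n) → Tendsto εn atTop (nhds 0) →
      ∃ hε : Fin N → ℕ → X,
        (∀ l, Tendsto (hε l) atTop (nhds (h l))) ∧
        (∀ l n, ebar + εn n • y + (εn n) ^ 2 • hε l n ∈ E) ∧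
        ∀ ν : Fin N → ℝ, (∀ l, 0 ≤ ν l) → (∑ l, ν l) = 1 →
          ∀ n, ebar + εn n • y + (εn n) ^ 2 • (∑ l, ν l • hε l n) ∈ E := by
  intro εn hpos hlim
  have hεn : Tendsto εn atTop (nhdsWithin 0 (Set.Ioi 0)) :=
    tendsto_nhdsWithin_of_tendsto_nhds_of_eventually_within _ hlim
      (Filter.Eventually.of_forall fun n => hpos n)
  set S : ℝ → Set X := fun ε => (fun k => (ε ^ 2)⁻¹ • (k - ebar - ε • y)) '' E with hS
  have hne : ∀ n, (S (εn n)).Nonempty := fun n => ⟨_, ⟨ebar, hebar, rfl⟩⟩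
  have hd : ∀ l, Tendsto (fun n => Metric.infDist (h l) (S (εn n))) atTop (nhds 0) :=
    fun l => (hh l).comp hεn
  have key : ∀ l n, ∃ w ∈ S (εn n),
      dist (h l) w < Metric.infDist (h l) (S (εn n)) + εn n := by
    intro l n
    exact (Metric.infDist_lt_iff (hne n)).1 (lt_add_of_pos_right _ (hpos n))
  choose hε hεS hεd using key
  have hmem : ∀ l n, ebar + εn n • y + (εn n) ^ 2 • hε l n ∈ E := by
    intro l n
    obtain ⟨e, he, hw⟩ := hεS l n
    have hε2 : (εn n) ^ 2 ≠ 0 := pow_ne_zero 2 (hpos n).ne'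
    have : ebar + εn n • y + (εn n) ^ 2 • hε l n = e := by
      rw [← hw, smul_inv_smul₀ hε2]
      abel
    rw [this]; exact he
  refine ⟨hε, ?_, hmem, ?_⟩
  · intro l
    rw [tendsto_iff_dist_tendsto_zero]
    refine squeeze_zero (g := fun n => Metric.infDist (h l) (S (εn n)) + εn n)
      (fun n => dist_nonneg) (fun n => ?_) ?_
    · rw [dist_comm]; exact (hεd l n).le
    · simpa using (hd l).add hlim
  · intro ν hν hν1 n
    have hsum : (∑ l, ν l • (ebar + εn n • y + (εn n) ^ 2 • hε l n))
        = ebar + εn n • y + (εn n) ^ 2 • (∑ l, ν l • hε l n) := by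
      simp only [smul_add, Finset.sum_add_distrib, ← Finset.sum_smul, hν1, one_smul,
        Finset.smul_sum]
      congr 1
      exact Finset.sum_congr rfl fun l _ => (smul_comm _ _ _)
    rw [← hsum]
    exact hE.sum_mem (fun l _ => hν l) hν1 (fun l _ => hmem l n)
end
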